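/- Let A → U → S be an extension of a semilattice of groups A by an inverse semigroup S, ρ a transversal of the idempotent-separating epimorphism j with ρ(E(S)) ⊆ E(U), and (α, λ, f) the induced twisted S-module structure. Then f(e,s) = α(ess⁻¹) for all e ∈ E(S) and s ∈ S if and only if ρ is order-preserving (s ≤ t implies ρ(s) ≤ ρ(t)). -/
import Mathlib


/-- An inverse semigroup structure: `iv` assigns to each element its unique
(generalized) inverse. -/
structure InvSemi (S : Type*) [Semigroup S] (iv : S → S) : Prop where
  rr : ∀ s, s * iv s * s = s
  ri : ∀ s, iv s * s * iv s = iv s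
  uniq : ∀ s t, s * t * s = s → t * s * t = t → t = iv s

/-- The natural partial order: `s ≤ t` iff `s = e * t` for an idempotent `e`. -/
def natLe {S : Type*} [Semigroup S] (s t : S) : Prop :=
  ∃ e, IsIdempotentElem e ∧ s = e * t

section InvLemmas

variable {T : Type*} [Semigroup T] {iv : T → T}

lemma cons2 {a b c : T} (hab : a * b = c) (y : T) : a * (b * y) = c * y := by
  rw [← mul_assoc, hab]

lemma cons3 {a b c d : T} (habc : a * b * c = d) (y : T) :
    a * (b * (c * y)) = d * y := by
  rw [← mul_assoc, ← mul_assoc, habc]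

lemma iv_iv (h : InvSemi T iv) (s : T) : iv (iv s) = s :=
  (h.uniq (iv s) s (h.ri s) (h.rr s)).symm

lemma inv_idem (h : InvSemi T iv) {e : T} (he : IsIdempotentElem e) : iv e = e :=
  (h.uniq e e (by rw [he.eq, he.eq]) (by rw [he.eq, he.eq])).symm

lemma rr' (h : InvSemi T iv) (s : T) : s * (iv s * s) = s := by
  rw [← mul_assoc]; exact h.rr s

lemma ri' (h : InvSemi T iv) (s : T) : iv s * (s * iv s) = iv s := by
  rw [← mul_assoc]; exact h.ri s

lemma mulinv_idem (h : InvSemi T iv) (s : T) : IsIdempotentElem (s * iv s) := by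
  show s * iv s * (s * iv s) = s * iv s
  rw [← mul_assoc, h.rr]

lemma invmul_idem (h : InvSemi T iv) (s : T) : IsIdempotentElem (iv s * s) := by
  show iv s * s * (iv s * s) = iv s * s
  rw [← mul_assoc, h.ri]

lemma idem_mul (h : InvSemi T iv) {e f : T} (he : IsIdempotentElem e)
    (hf : IsIdempotentElem f) : IsIdempotentElem (e * f) := by
  have hrr := h.rr (e * f)
  have hri := h.ri (e * f)
  have h1 : (e * f) * (f * (iv (e * f) * e)) * (e * f) = e * f := by
    simp only [mul_assoc] at hrr ⊢
    rw [cons2 hf.eq, cons2 he.eq]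
    exact hrr
  have h2 : (f * (iv (e * f) * e)) * (e * f) * (f * (iv (e * f) * e))
      = f * (iv (e * f) * e) := by
    simp only [mul_assoc]
    rw [cons2 he.eq, cons2 hf.eq, ← mul_assoc e f, cons3 hri]
  have h3 : f * (iv (e * f) * e) = iv (e * f) :=
    h.uniq (e * f) (f * (iv (e * f) * e)) h1 h2
  have hxidem : IsIdempotentElem (iv (e * f)) := by
    show iv (e * f) * iv (e * f) = iv (e * f)
    conv_lhs => rw [← h3]
    simp only [mul_assoc]
    rw [← mul_assoc e f, cons3 hri]
    exact h3
  have h4 : e * f = iv (e * f) := by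
    conv_lhs => rw [← iv_iv h (e * f)]
    exact inv_idem h hxidem
  show e * f * (e * f) = e * f
  conv_lhs => rw [h4]
  rw [hxidem.eq, ← h4]

lemma idem_comm (h : InvSemi T iv) {e f : T} (he : IsIdempotentElem e)
    (hf : IsIdempotentElem f) : e * f = f * e := by
  have hef := idem_mul h he hf
  have hfe := idem_mul h hf he
  have h1 : (e * f) * (f * e) * (e * f) = e * f := by
    simp only [mul_assoc]
    rw [cons2 hf.eq, cons2 he.eq, ← mul_assoc, hef.eq]
  have h2 : (f * e) * (e * f) * (f * e) = f * e := by
    simp only [mul_assoc]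
    rw [cons2 he.eq, cons2 hf.eq, ← mul_assoc, hfe.eq]
  have := h.uniq (e * f) (f * e) h1 h2
  rw [inv_idem h hef] at this
  exact this.symm

lemma iv_mul (h : InvSemi T iv) (s t : T) : iv (s * t) = iv t * iv s := by
  have h1 : (s * t) * (iv t * iv s) * (s * t) = s * t := by
    simp only [mul_assoc]
    rw [← mul_assoc (iv s) s t, ← mul_assoc t (iv t), ← mul_assoc (t * iv t),
      idem_comm h (mulinv_idem h t) (invmul_idem h s)]
    simp only [mul_assoc]
    rw [cons3 (h.rr s), rr' h t]
  have h2 : (iv t * iv s) * (s * t) * (iv t * iv s) = iv t * iv s := by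
    simp only [mul_assoc]
    rw [← mul_assoc (iv s) s, ← mul_assoc t (iv t), ← mul_assoc (iv s * s),
      idem_comm h (invmul_idem h s) (mulinv_idem h t)]
    simp only [mul_assoc]
    rw [cons3 (h.ri t), ri' h s]
  exact (h.uniq (s * t) (iv t * iv s) h1 h2).symm

end InvLemmas

/-- For an extension `A → U → S` with transversal `ρ`, the induced twisting `F`
satisfies `F(e,s) = α(ess⁻¹)` for all idempotents `e` iff `ρ` is
order-preserving. -/
theorem stmt18 {A U S : Type*} [Semigroup A] [Semigroup U] [Semigroup S]
    (ivA : A → A) (ivU : U → U) (ivS : S → S)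
    (hA : InvSemi A ivA) (hCl : ∀ a : A, a * ivA a = ivA a * a)
    (hU : InvSemi U ivU) (hS : InvSemi S ivS)
    (i : A →ₙ* U) (j : U →ₙ* S)
    (hi : Function.Injective i) (hj : Function.Surjective j)
    (hjsep : ∀ e f : U, IsIdempotentElem e → IsIdempotentElem f →
      j e = j f → e = f)
    (hrange : Set.range i = {u : U | IsIdempotentElem (j u)})
    (ρ : S → U) (hρ : ∀ s, j (ρ s) = s)
    (hρE : ∀ e : S, IsIdempotentElem e → IsIdempotentElem (ρ e))
    (α : S → A) (hα : ∀ e : S, IsIdempotentElem e → i (α e) = ρ e)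
    (F : S → S → A)
    (hF : ∀ s t : S, ρ s * ρ t = i (F s t) * ρ (s * t) ∧
      i (F s t * ivA (F s t)) = ρ (s * t) * ivU (ρ (s * t))) :
    (∀ (e s : S), IsIdempotentElem e → F e s = α (e * s * ivS s)) ↔
      (∀ s t : S, natLe s t → natLe (ρ s) (ρ t)) := by
  have jiv : ∀ u : U, j (ivU u) = ivS (j u) := fun u =>
    hS.uniq (j u) (j (ivU u)) (by rw [← map_mul, ← map_mul, hU.rr])
      (by rw [← map_mul, ← map_mul, hU.ri])
  constructor
  · intro hFα s t hle
    obtain ⟨e, he, hst⟩ := hle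
    have het : IsIdempotentElem (e * t * ivS t) := by
      rw [mul_assoc]; exact idem_mul hS he (mulinv_idem hS t)
    have hiF : i (F e t) = ρ (e * t * ivS t) := by
      rw [hFα e t he]; exact hα _ het
    have hiFidem : IsIdempotentElem (i (F e t)) := by
      rw [hiF]; exact hρE _ het
    have hFidem : IsIdempotentElem (F e t) :=
      hi (by rw [map_mul]; exact hiFidem.eq)
    have h2 := (hF e t).2
    rw [inv_idem hA hFidem, hFidem.eq] at h2
    have h1 := (hF e t).1
    rw [h2, hU.rr] at h1
    exact ⟨ρ e, hρE e he, by rw [hst]; exact h1.symm⟩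
  · intro hOP e s he
    obtain ⟨g, hg, hgeq⟩ := hOP (e * s) s ⟨e, he, rfl⟩
    have h1 := (hF e s).1
    have h2 := (hF e s).2
    have hFF : F e s = F e s * (F e s * ivA (F e s)) := by
      rw [hCl, ← mul_assoc]; exact (hA.rr _).symm
    have key1 : i (F e s) = i (F e s) * (ρ (e * s) * ivU (ρ (e * s))) := by
      conv_lhs => rw [hFF, map_mul, h2]
    have key2 : i (F e s) = ρ e * ρ s * ivU (ρ (e * s)) := by
      rw [h1, mul_assoc]; exact key1
    have hivx : ivU (ρ (e * s)) = ivU (ρ s) * g := by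
      rw [hgeq, iv_mul hU, inv_idem hU hg]
    have hidem : IsIdempotentElem (i (F e s)) := by
      rw [key2, hivx]
      have hr : ρ e * ρ s * (ivU (ρ s) * g) = ρ e * (ρ s * ivU (ρ s)) * g := by
        simp only [mul_assoc]
      rw [hr]
      exact idem_mul hU (idem_mul hU (hρE e he) (mulinv_idem hU (ρ s))) hg
    have hT0 : IsIdempotentElem (e * s * ivS s) := by
      rw [mul_assoc]; exact idem_mul hS he (mulinv_idem hS s)
    have hjeq : j (i (F e s)) = j (ρ (e * s * ivS s)) := by
      rw [hρ, key2, map_mul, map_mul, jiv, hρ, hρ, hρ, iv_mul hS,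
        inv_idem hS he]
      simp only [mul_assoc]
      rw [← mul_assoc s (ivS s) e, idem_comm hS (mulinv_idem hS s) he,
        cons2 he.eq]
    have hfin := hjsep (i (F e s)) (ρ (e * s * ivS s)) hidem (hρE _ hT0) hjeq
    rw [← hα _ hT0] at hfin
    exact hi hfin
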